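/- arXiv:2010.02721 — 4 statements merged into one kernel-verified Lean document; each statement's English description precedes it below -/
import Mathlib

section
/- Let q ≥ 2 be an integer. Then for all 0 < y < 1: ln(((1-y)^q + (1+y)^q)/2) ≤ q·y·((1+y)^{q-1} - (1-y)^{q-1})² / (4(q-1)·y·(1-y²)^{q-2} + (1+y)^{2q-2} - (1-y)^{2q-2}). -/
set_option maxHeartbeats 1000000

open Real Set Filter

private lemma key_poly (x u v Y : ℝ) (hx0 : 0 < x) (hx1 : x < 1) (hu : 0 < u)
    (huv : u ≤ v) (hxvu : x * v ≤ u) (hY : u ≤ Y) :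
    0 ≤ (x*(v^2-u^2)*(v^2+u^2+2*x*u*v)) * Y^2
      + ((v^2-u^2)*(x*u^2*(1-3*x^2) - u*v*(1+x^2))) * (x*v) * Y
      + (u^3*v*(1-x^2)^2) * (x*v)^2 := by
  have hv : 0 < v := lt_of_lt_of_le hu huv
  have hw : 0 ≤ v^2 - u^2 := by nlinarith
  have hat : 0 ≤ x*(v^2-u^2)*(v^2+u^2+2*x*u*v) := by
    have : 0 ≤ v^2+u^2+2*x*u*v := by positivity
    positivity
  have hQ0 : 0 ≤ x*u^2*((u^2-x^2*v^2)*(v^2-u^2) + x*u*v*(1-x^2)*((4-x^2)*v^2-3*u^2)) := by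
    have h1 : 0 ≤ u^2 - x^2*v^2 := by nlinarith [mul_pos hx0 hv]
    have h2 : 0 ≤ (4-x^2)*v^2 - 3*u^2 := by nlinarith
    have h3 : 0 ≤ 1 - x^2 := by nlinarith
    positivity
  have hQ1 : 0 ≤ x*u*((1-x^2)*v^4 + (1+x^2)*u^2*v^2 - 2*u^4 + x*u*v*(v^2-u^2)*(5-3*x^2)) := by
    have h3 : 0 ≤ 1 - x^2 := by nlinarith
    have h4 : 0 ≤ (1-x^2)*v^4 + (1+x^2)*u^2*v^2 - 2*u^4 := by
      nlinarith [pow_le_pow_left₀ hu.le huv 4,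
        mul_le_mul_of_nonneg_left (mul_le_mul huv huv hu.le hv.le) (sq_nonneg u)]
    have h5 : 0 ≤ x*u*v*(v^2-u^2)*(5-3*x^2) := by
      have : 0 ≤ 5-3*x^2 := by nlinarith
      positivity
    nlinarith [mul_pos hx0 hu]
  set at_ := x*(v^2-u^2)*(v^2+u^2+2*x*u*v) with hat_def
  set bt_ := (v^2-u^2)*(x*u^2*(1-3*x^2) - u*v*(1+x^2)) with hbt_def
  set ct_ := u^3*v*(1-x^2)^2 with hct_def
  have id1 : at_ * Y^2 + bt_*(x*v)*Y + ct_*(x*v)^2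
      = (at_ * u^2 + bt_*(x*v)*u + ct_*(x*v)^2) + (Y-u)*(at_*(Y+u) + bt_*(x*v)) := by ring
  have idQ0 : at_ * u^2 + bt_*(x*v)*u + ct_*(x*v)^2
      = x*u^2*((u^2-x^2*v^2)*(v^2-u^2) + x*u*v*(1-x^2)*((4-x^2)*v^2-3*u^2)) := by
    rw [hat_def, hbt_def, hct_def]; ring
  have idQ1 : 2*at_*u + bt_*(x*v)
      = x*u*((1-x^2)*v^4 + (1+x^2)*u^2*v^2 - 2*u^4 + x*u*v*(v^2-u^2)*(5-3*x^2)) := by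
    rw [hat_def, hbt_def]; ring
  have hslope : 0 ≤ at_*(Y+u) + bt_*(x*v) := by
    have hid : at_*(Y+u) + bt_*(x*v) = (2*at_*u + bt_*(x*v)) + at_*(Y-u) := by ring
    rw [hid, idQ1]
    have := mul_nonneg hat (by linarith : (0:ℝ) ≤ Y - u)
    linarith
  rw [id1, idQ0]
  have := mul_nonneg (by linarith : (0:ℝ) ≤ Y - u) hslope
  linarith

private lemma ind1 (y : ℝ) (h0 : 0 ≤ y) (h1 : y ≤ 1) :
    ∀ k : ℕ, 1 ≤ k → y * ((1+y)^k + (1-y)^k) ≤ (1+y)^k - (1-y)^k := by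
  intro k hk
  induction k, hk using Nat.le_induction with
  | base => simp [pow_one]; nlinarith
  | succ k hk ih =>
    have hs : (1-y)^k ≤ (1+y)^k := pow_le_pow_left₀ (by linarith) (by linarith) k
    have e1 : (1+y)^(k+1) = (1+y)^k + y*(1+y)^k := by ring
    have e2 : (1-y)^(k+1) = (1-y)^k - y*(1-y)^k := by ring
    rw [e1, e2]
    nlinarith [ih, hs, mul_nonneg (sub_nonneg.2 hs) (by nlinarith : (0:ℝ) ≤ 1 - y^2)]

private lemma ind2 (y : ℝ) (h0 : 0 ≤ y) (h1 : y ≤ 1) :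
    ∀ k : ℕ, (1+y)^k - (1-y)^k ≤ (k:ℝ) * y * ((1+y)^k + (1-y)^k) := by
  intro k
  induction k with
  | zero => simp
  | succ k ih =>
    have hs : (1-y)^k ≤ (1+y)^k := pow_le_pow_left₀ (by linarith) (by linarith) k
    have e1 : (1+y)^(k+1) = (1+y)^k + y*(1+y)^k := by ring
    have e2 : (1-y)^(k+1) = (1-y)^k - y*(1-y)^k := by ring
    have hk0 : (0:ℝ) ≤ (k:ℝ) := Nat.cast_nonneg k
    rw [e1, e2]
    push_cast
    nlinarith [ih, hs, mul_nonneg h0 (sub_nonneg.2 hs),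
      mul_nonneg hk0 (mul_nonneg h0 (mul_nonneg h0 (sub_nonneg.2 hs)))]

private lemma KI_core (m x a b : ℝ) (hm : 2 ≤ m) (hx0 : 0 < x) (hx1 : x < 1)
    (ha : 0 < a) (hb : 0 < b)
    (h1 : x*(a*(1+x)^2 + b*(1-x)^2) ≤ a*(1+x)^2 - b*(1-x)^2)
    (h2 : a*(1+x)^2 - b*(1-x)^2 ≤ m*x*(a*(1+x)^2 + b*(1-x)^2)) :
    (m+1) * (a*(1+x)^2 - b*(1-x)^2)
        * (4*m*x*((a*(1+x))*(b*(1-x))) + a^2*(1+x)^4 - b^2*(1-x)^4)^2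
    ≤ 2 * ((b*(1-x)^3 + a*(1+x)^3)/2) *
      ( ((m+1)*(a*(1+x)^2 - b*(1-x)^2)^2
          + (m+1)*x*(2*(a*(1+x)^2 - b*(1-x)^2)*(m*((a*(1+x)) + (b*(1-x))))))
          * (4*m*x*((a*(1+x))*(b*(1-x))) + a^2*(1+x)^4 - b^2*(1-x)^4)
        - ((m+1)*x*(a*(1+x)^2 - b*(1-x)^2)^2)
          * (4*m*((a*(1+x))*(b*(1-x))) + 4*m*x*((m-1)*(a*b)*(-(2*x)))
             + (2*m*(a^2*(1+x)^3) + 2*m*(b^2*(1-x)^3))) ) := by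
  have hx2 : (0:ℝ) < 1 - x^2 := by nlinarith
  set u := a*(1+x)^2 - b*(1-x)^2 with hu_def
  set v := a*(1+x)^2 + b*(1-x)^2 with hv_def
  have hv0 : 0 < v := by rw [hv_def]; positivity
  have hu0 : 0 < u := lt_of_lt_of_le (mul_pos hx0 hv0) h1
  have huv : u ≤ v := by
    rw [hu_def, hv_def]
    nlinarith [mul_pos hb (pow_pos (show (0:ℝ) < 1-x by linarith) 2)]
  have hkey := key_poly x u v (m*x*v) hx0 hx1 hu0 huv h1 (by linarith [h2])
  rw [← sub_nonneg]
  have hfac : (0:ℝ) < (1-x^2)^2*x^2*v^2 := by positivity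
  have hprod : 0 ≤ (m+1)*x*u*((x*(v^2-u^2)*(v^2+u^2+2*x*u*v)) * (m*x*v)^2
      + ((v^2-u^2)*(x*u^2*(1-3*x^2) - u*v*(1+x^2))) * (x*v) * (m*x*v)
      + (u^3*v*(1-x^2)^2) * (x*v)^2) := by
    apply mul_nonneg _ hkey
    have : (0:ℝ) ≤ m + 1 := by linarith
    positivity
  have master : (2 * ((b*(1-x)^3 + a*(1+x)^3)/2) *
      ( ((m+1)*(a*(1+x)^2 - b*(1-x)^2)^2
          + (m+1)*x*(2*(a*(1+x)^2 - b*(1-x)^2)*(m*((a*(1+x)) + (b*(1-x))))))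
          * (4*m*x*((a*(1+x))*(b*(1-x))) + a^2*(1+x)^4 - b^2*(1-x)^4)
        - ((m+1)*x*(a*(1+x)^2 - b*(1-x)^2)^2)
          * (4*m*((a*(1+x))*(b*(1-x))) + 4*m*x*((m-1)*(a*b)*(-(2*x)))
             + (2*m*(a^2*(1+x)^3) + 2*m*(b^2*(1-x)^3))) )
      - (m+1) * (a*(1+x)^2 - b*(1-x)^2)
        * (4*m*x*((a*(1+x))*(b*(1-x))) + a^2*(1+x)^4 - b^2*(1-x)^4)^2)
      * ((1-x^2)^2*x^2*v^2)
      = (m+1)*x*u*((x*(v^2-u^2)*(v^2+u^2+2*x*u*v)) * (m*x*v)^2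
      + ((v^2-u^2)*(x*u^2*(1-3*x^2) - u*v*(1+x^2))) * (x*v) * (m*x*v)
      + (u^3*v*(1-x^2)^2) * (x*v)^2) := by
    rw [hu_def, hv_def]; ring
  rw [← master] at hprod
  exact (mul_nonneg_iff_of_pos_right hfac).mp hprod

private lemma KI (n : ℕ) (hn : 2 ≤ n) (x : ℝ) (hx0 : 0 < x) (hx1 : x < 1) :
    ((n:ℝ)+1) * ((1+x)^n - (1-x)^n)
        * (4*(n:ℝ)*x*(1-x^2)^(n-1) + (1+x)^(2*n) - (1-x)^(2*n))^2
    ≤ 2 * (((1-x)^(n+1)+(1+x)^(n+1))/2) *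
      ( (((n:ℝ)+1)*((1+x)^n-(1-x)^n)^2
          + ((n:ℝ)+1)*x*(2*((1+x)^n-(1-x)^n)*((n:ℝ)*((1+x)^(n-1)+(1-x)^(n-1)))))
          * (4*(n:ℝ)*x*(1-x^2)^(n-1) + (1+x)^(2*n) - (1-x)^(2*n))
        - (((n:ℝ)+1)*x*((1+x)^n-(1-x)^n)^2)
          * (4*(n:ℝ)*(1-x^2)^(n-1) + 4*(n:ℝ)*x*(((n:ℝ)-1)*(1-x^2)^(n-2)*(-(2*x)))
             + (2*(n:ℝ)*(1+x)^(2*n-1) + 2*(n:ℝ)*(1-x)^(2*n-1))) ) := by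
  have hs0 : (0:ℝ) < 1+x := by linarith
  have ht0 : (0:ℝ) < 1-x := by linarith
  have h1 := ind1 x hx0.le hx1.le n (by omega)
  have h2 := ind2 x hx0.le hx1.le n
  have eA : (1+x)^n = (1+x)^(n-2)*(1+x)^2 := by rw [← pow_add]; congr 1; omega
  have eA1 : (1+x)^(n-1) = (1+x)^(n-2)*(1+x) := by rw [← pow_succ]; congr 1; omega
  have eA3 : (1+x)^(n+1) = (1+x)^(n-2)*(1+x)^3 := by rw [← pow_add]; congr 1; omega
  have eA4 : (1+x)^(2*n) = ((1+x)^(n-2))^2*(1+x)^4 := by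
    rw [← pow_mul, ← pow_add]; congr 1; omega
  have eA5 : (1+x)^(2*n-1) = ((1+x)^(n-2))^2*(1+x)^3 := by
    rw [← pow_mul, ← pow_add]; congr 1; omega
  have eB : (1-x)^n = (1-x)^(n-2)*(1-x)^2 := by rw [← pow_add]; congr 1; omega
  have eB1 : (1-x)^(n-1) = (1-x)^(n-2)*(1-x) := by rw [← pow_succ]; congr 1; omega
  have eB3 : (1-x)^(n+1) = (1-x)^(n-2)*(1-x)^3 := by rw [← pow_add]; congr 1; omega
  have eB4 : (1-x)^(2*n) = ((1-x)^(n-2))^2*(1-x)^4 := by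
    rw [← pow_mul, ← pow_add]; congr 1; omega
  have eB5 : (1-x)^(2*n-1) = ((1-x)^(n-2))^2*(1-x)^3 := by
    rw [← pow_mul, ← pow_add]; congr 1; omega
  have eC1 : (1-x^2)^(n-1) = ((1+x)^(n-2)*(1+x))*((1-x)^(n-2)*(1-x)) := by
    rw [show (1:ℝ)-x^2 = (1+x)*(1-x) by ring, mul_pow, eA1, eB1]
  have eC2 : (1-x^2)^(n-2) = (1+x)^(n-2)*(1-x)^(n-2) := by
    rw [show (1:ℝ)-x^2 = (1+x)*(1-x) by ring, mul_pow]
  rw [eA, eB] at h1 h2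
  have hmain := KI_core (n:ℝ) x ((1+x)^(n-2)) ((1-x)^(n-2))
    (by exact_mod_cast hn) hx0 hx1 (pow_pos hs0 _) (pow_pos ht0 _)
    (by linarith [h1]) (by linarith [h2])
  rw [eA3, eB3, eA, eB, eA1, eB1, eC1, eC2, eA4, eB4, eA5, eB5]
  exact hmain

private noncomputable def Ff (n : ℕ) (t : ℝ) : ℝ := ((1-t)^(n+1)+(1+t)^(n+1))/2
private noncomputable def Nff (n : ℕ) (t : ℝ) : ℝ := ((n:ℝ)+1)*t*((1+t)^n-(1-t)^n)^2
private noncomputable def Dg (n : ℕ) (t : ℝ) : ℝ :=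
  4*(n:ℝ)*t*(1-t^2)^(n-1) + (1+t)^(2*n) - (1-t)^(2*n)
private noncomputable def hhf (n : ℕ) (t : ℝ) : ℝ := Nff n t / Dg n t - Real.log (Ff n t)

private lemma Ff_pos (n : ℕ) {t : ℝ} (h0 : 0 ≤ t) (h1 : t ≤ 1) : 0 < Ff n t := by
  unfold Ff
  have h2 : (0:ℝ) < (1+t)^(n+1) := pow_pos (by linarith) _
  have h3 : (0:ℝ) ≤ (1-t)^(n+1) := pow_nonneg (by linarith) _
  linarith

private lemma Dg_pos (n : ℕ) (hn : 1 ≤ n) {t : ℝ} (h0 : 0 < t) (h1 : t < 1) : 0 < Dg n t := by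
  unfold Dg
  have h2 : (1-t)^(2*n) < (1+t)^(2*n) :=
    pow_lt_pow_left₀ (by linarith) (by linarith) (by omega)
  have h3 : (0:ℝ) ≤ 4*(n:ℝ)*t*(1-t^2)^(n-1) := by
    have : (0:ℝ) ≤ 1 - t^2 := by nlinarith
    positivity
  linarith

private lemma ratio_le (n : ℕ) (hn : 1 ≤ n) {t : ℝ} (h0 : 0 ≤ t) (h1 : t < 1) :
    Nff n t / Dg n t ≤ ((n:ℝ)+1)*t := by
  rcases eq_or_lt_of_le h0 with rfl | ht
  · simp [Nff]
  · rw [div_le_iff₀ (Dg_pos n hn ht h1)]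
    unfold Nff Dg
    have e1 : (1+t)^(2*n) = (1+t)^n * (1+t)^n := by rw [two_mul, pow_add]
    have e2 : (1-t)^(2*n) = (1-t)^n * (1-t)^n := by rw [two_mul, pow_add]
    have hB : (0:ℝ) ≤ (1-t)^n := pow_nonneg (by linarith) _
    have hs : (1-t)^n ≤ (1+t)^n := pow_le_pow_left₀ (by linarith) (by linarith) _
    have h3 : (0:ℝ) ≤ 4*(n:ℝ)*t*(1-t^2)^(n-1) := by
      have : (0:ℝ) ≤ 1 - t^2 := by nlinarith
      positivity
    rw [e1, e2]
    have key : ((1+t)^n-(1-t)^n)^2 ≤ 4*(n:ℝ)*t*(1-t^2)^(n-1) + (1+t)^n*(1+t)^n - (1-t)^n*(1-t)^n := by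
      nlinarith [mul_nonneg hB (sub_nonneg.2 hs)]
    exact mul_le_mul_of_nonneg_left key (by positivity)

private lemma ratio_nonneg (n : ℕ) {t : ℝ} (h0 : 0 ≤ t) (h1 : t ≤ 1) :
    0 ≤ Nff n t / Dg n t := by
  apply div_nonneg
  · unfold Nff
    positivity
  · unfold Dg
    have h2 : (1-t)^(2*n) ≤ (1+t)^(2*n) := pow_le_pow_left₀ (by linarith) (by linarith) _
    have h3 : (0:ℝ) ≤ 4*(n:ℝ)*t*(1-t^2)^(n-1) := by
      have : (0:ℝ) ≤ 1 - t^2 := by nlinarith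
      positivity
    linarith

private lemma main_aux (n : ℕ) (hn : 2 ≤ n) (y : ℝ) (hy0 : 0 < y) (hy1 : y < 1) :
    Real.log (Ff n y) ≤ Nff n y / Dg n y := by
  have hderiv : ∀ x ∈ Ioo (0:ℝ) y, HasDerivAt (hhf n)
      (((((n:ℝ)+1)*((1+x)^n-(1-x)^n)^2
          + ((n:ℝ)+1)*x*(2*((1+x)^n-(1-x)^n)*((n:ℝ)*((1+x)^(n-1)+(1-x)^(n-1))))) * Dg n x
        - Nff n x * (4*(n:ℝ)*(1-x^2)^(n-1) + 4*(n:ℝ)*x*(((n:ℝ)-1)*(1-x^2)^(n-2)*(-(2*x)))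
             + (2*(n:ℝ)*(1+x)^(2*n-1) + 2*(n:ℝ)*(1-x)^(2*n-1)))) / (Dg n x)^2
        - (((n:ℝ)+1)*((1+x)^n - (1-x)^n)/2) / Ff n x) x := by
    intro x hx
    obtain ⟨hx0, hxy⟩ := hx
    have hx1 : x < 1 := lt_trans hxy hy1
    have hid : HasDerivAt (fun t:ℝ => t) 1 x := hasDerivAt_id x
    have hp : HasDerivAt (fun t:ℝ => 1+t) 1 x := by simpa using hid.const_add 1
    have hm : HasDerivAt (fun t:ℝ => 1-t) (-1) x := by simpa using hid.const_sub 1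
    have hA : HasDerivAt (fun t:ℝ => (1+t)^n) ((n:ℝ)*(1+x)^(n-1)) x := by
      simpa using hp.fun_pow n
    have hB : HasDerivAt (fun t:ℝ => (1-t)^n) (-((n:ℝ)*(1-x)^(n-1))) x := by
      have h := hm.fun_pow n
      convert h using 1
      · rfl
      · rfl
      ring
    have hA1 : HasDerivAt (fun t:ℝ => (1+t)^(n+1)) (((n:ℝ)+1)*(1+x)^n) x := by
      have h := hp.fun_pow (n+1)
      convert h using 1
      · rfl
      · rfl
      rw [Nat.add_sub_cancel]
      push_cast
      ring
    have hB1 : HasDerivAt (fun t:ℝ => (1-t)^(n+1)) (-(((n:ℝ)+1)*(1-x)^n)) x := by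
      have h := hm.fun_pow (n+1)
      convert h using 1
      · rfl
      · rfl
      rw [Nat.add_sub_cancel]
      push_cast
      ring
    have hF : HasDerivAt (Ff n) (((n:ℝ)+1)*((1+x)^n - (1-x)^n)/2) x := by
      unfold Ff
      have h := (hB1.add hA1).div_const 2
      exact h.congr_deriv (by ring)
    have hu : HasDerivAt (fun t:ℝ => (1+t)^n - (1-t)^n)
        ((n:ℝ)*(1+x)^(n-1) - -((n:ℝ)*(1-x)^(n-1))) x := hA.sub hB
    have hsq := hu.fun_pow 2
    have hlin : HasDerivAt (fun t:ℝ => ((n:ℝ)+1)*t) ((n:ℝ)+1) x := by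
      simpa using hid.const_mul ((n:ℝ)+1)
    have hNf : HasDerivAt (Nff n) (((n:ℝ)+1)*((1+x)^n-(1-x)^n)^2
          + ((n:ℝ)+1)*x*(2*((1+x)^n-(1-x)^n)*((n:ℝ)*((1+x)^(n-1)+(1-x)^(n-1))))) x := by
      unfold Nff
      have h := hlin.mul hsq
      exact h.congr_deriv (by push_cast; ring)
    have hsq2 : HasDerivAt (fun t:ℝ => 1 - t^2) (-(2*x)) x := by
      have h := (hasDerivAt_pow 2 x).const_sub 1
      convert h using 1
      · rfl
      · rfl
      push_cast
      ring
    have hw : HasDerivAt (fun t:ℝ => (1-t^2)^(n-1)) (((n:ℝ)-1)*(1-x^2)^(n-2)*(-(2*x))) x := by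
      have h := hsq2.fun_pow (n-1)
      convert h using 1
      · rfl
      · rfl
      rw [Nat.cast_sub (by omega), show n-1-1 = n-2 by omega]
      push_cast
      ring
    have hlin4 : HasDerivAt (fun t:ℝ => 4*(n:ℝ)*t) (4*(n:ℝ)) x := by
      simpa using hid.const_mul (4*(n:ℝ))
    have hD1 := hlin4.mul hw
    have hA2 : HasDerivAt (fun t:ℝ => (1+t)^(2*n)) (2*(n:ℝ)*(1+x)^(2*n-1)) x := by
      have h := hp.fun_pow (2*n)
      convert h using 1
      · rfl
      · rfl
      push_cast
      ring
    have hB2 : HasDerivAt (fun t:ℝ => (1-t)^(2*n)) (-(2*(n:ℝ)*(1-x)^(2*n-1))) x := by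
      have h := hm.fun_pow (2*n)
      convert h using 1
      · rfl
      · rfl
      push_cast
      ring
    have hDg : HasDerivAt (Dg n)
        (4*(n:ℝ)*(1-x^2)^(n-1) + 4*(n:ℝ)*x*(((n:ℝ)-1)*(1-x^2)^(n-2)*(-(2*x)))
             + (2*(n:ℝ)*(1+x)^(2*n-1) + 2*(n:ℝ)*(1-x)^(2*n-1))) x := by
      unfold Dg
      have h := (hD1.add hA2).sub hB2
      exact h.congr_deriv (by ring)
    have hDne : Dg n x ≠ 0 := ne_of_gt (Dg_pos n (by omega) hx0 hx1)
    have hFne : Ff n x ≠ 0 := ne_of_gt (Ff_pos n hx0.le hx1.le)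
    have h := (hNf.div hDg hDne).sub (hF.log hFne)
    unfold hhf
    exact h
  have hderiv_nonneg : ∀ x ∈ Ioo (0:ℝ) y, 0 ≤ deriv (hhf n) x := by
    intro x hx
    rw [(hderiv x hx).deriv]
    obtain ⟨hx0, hxy⟩ := hx
    have hx1 : x < 1 := lt_trans hxy hy1
    have hDpos := Dg_pos n (by omega) hx0 hx1
    have hFpos := Ff_pos n hx0.le hx1.le
    rw [sub_nonneg, div_le_div_iff₀ hFpos (pow_pos hDpos 2)]
    have hKI := KI n hn x hx0 hx1
    unfold Ff Nff Dg
    linarith [hKI]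
  have hcont : ContinuousOn (hhf n) (Icc 0 y) := by
    unfold hhf
    apply ContinuousOn.sub
    · intro t ht
      rcases eq_or_lt_of_le ht.1 with h0 | ht0
      · have h0' : t = 0 := h0.symm
        subst h0'
        have hval : Nff n 0 / Dg n 0 = 0 := by
          unfold Nff
          simp
        unfold ContinuousWithinAt
        have hval' : (fun x => Nff n x / Dg n x) 0 = 0 := hval
        rw [hval']
        apply squeeze_zero'
        · apply eventually_nhdsWithin_of_forall
          intro s hs
          exact ratio_nonneg n hs.1 (le_of_lt (lt_of_le_of_lt hs.2 hy1))
        · apply eventually_nhdsWithin_of_forall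
          intro s hs
          exact ratio_le n (by omega) hs.1 (lt_of_le_of_lt hs.2 hy1)
        · have hc : Continuous fun s:ℝ => ((n:ℝ)+1)*s := by continuity
          have h2 := (hc.tendsto 0).mono_left (nhdsWithin_le_nhds (s := Icc (0:ℝ) y))
          simpa using h2
      · have ht1 : t < 1 := lt_of_le_of_lt ht.2 hy1
        apply ContinuousAt.continuousWithinAt
        apply ContinuousAt.div
        · have hc : Continuous (Nff n) := by unfold Nff; fun_prop
          exact hc.continuousAt
        · have hc : Continuous (Dg n) := by unfold Dg; fun_prop
          exact hc.continuousAt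
        · exact ne_of_gt (Dg_pos n (by omega) ht0 ht1)
    · apply ContinuousOn.log
      · have hc : Continuous (Ff n) := by unfold Ff; fun_prop
        exact hc.continuousOn
      · intro t ht
        exact ne_of_gt (Ff_pos n ht.1 (le_of_lt (lt_of_le_of_lt ht.2 hy1)))
  have hmono : MonotoneOn (hhf n) (Icc 0 y) := by
    apply monotoneOn_of_deriv_nonneg (convex_Icc 0 y) hcont
    · rw [interior_Icc]
      intro x hx
      exact ((hderiv x hx).differentiableAt).differentiableWithinAt
    · rw [interior_Icc]
      exact hderiv_nonneg
  have h0 : hhf n 0 = 0 := by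
    unfold hhf Nff Ff
    norm_num
  have hle := hmono (left_mem_Icc.2 hy0.le) (right_mem_Icc.2 hy0.le) hy0.le
  rw [h0] at hle
  unfold hhf at hle
  linarith

/-- **Lemma.** Let `q ≥ 2` be an integer. Then for all `0 < y < 1`,
`ln(((1-y)^q + (1+y)^q)/2) ≤ q·y·((1+y)^{q-1} - (1-y)^{q-1})² /
(4(q-1)·y·(1-y²)^{q-2} + (1+y)^{2q-2} - (1-y)^{2q-2})`. -/
theorem log_H_le_ratio (q : ℕ) (hq : 2 ≤ q) (y : ℝ) (hy0 : 0 < y) (hy1 : y < 1) :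
    Real.log (((1 - y) ^ q + (1 + y) ^ q) / 2) ≤
      (q : ℝ) * y * ((1 + y) ^ (q - 1) - (1 - y) ^ (q - 1)) ^ 2 /
        (4 * ((q : ℝ) - 1) * y * (1 - y ^ 2) ^ (q - 2) +
          (1 + y) ^ (2 * q - 2) - (1 - y) ^ (2 * q - 2)) := by
  obtain ⟨n, rfl⟩ : ∃ n, q = n + 1 := ⟨q - 1, by omega⟩
  have hn1 : 1 ≤ n := by omega
  rcases eq_or_lt_of_le hn1 with h1 | h2
  · -- q = 2 case
    have hq2 : n = 1 := h1.symm
    subst hq2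
    have key : Real.log (1 + y^2) ≤ y^2 := by
      have h := Real.log_le_sub_one_of_pos (show (0:ℝ) < 1+y^2 by positivity)
      linarith
    simp only [show (1:ℕ)+1 = 2 from rfl, show (1:ℕ)+1-1 = 1 from rfl,
      show (1:ℕ)+1-2 = 0 from rfl, show 2*((1:ℕ)+1)-2 = 2 from rfl, pow_zero, pow_one]
    push_cast
    rw [show (((1:ℝ)-y)^2+(1+y)^2)/2 = 1+y^2 by ring]
    have hd : (4:ℝ)*(2-1)*y*1 + (1+y)^2 - (1-y)^2 = 8*y := by ring
    rw [hd]
    have hnum : (2:ℝ)*y*((1+y)-(1-y))^2 = y^2*(8*y) := by ring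
    rw [hnum, mul_div_assoc, div_self (by positivity : (8:ℝ)*y ≠ 0), mul_one]
    exact key
  · -- q ≥ 3, n ≥ 2
    have hn2 : 2 ≤ n := h2
    have e1 : n + 1 - 1 = n := by omega
    have e2 : n + 1 - 2 = n - 1 := by omega
    have e3 : 2 * (n+1) - 2 = 2 * n := by omega
    rw [e1, e2, e3]
    have ecast : ((n+1:ℕ):ℝ) = (n:ℝ) + 1 := by push_cast; ring
    rw [ecast]
    have := main_aux n hn2 y hy0 hy1
    unfold Ff Nff Dg at this
    have ecast2 : ((n:ℝ) + 1 - 1) = (n:ℝ) := by ring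
    rw [ecast2]
    exact this
end

section
/- Let q ≥ 2 be an integer. Then for all real x ≥ 0: (q-2)·x·(x+2)·((1+x)^{2q-1} + 1) - (2-2x)·(1+x)^{2q-1} + (4x+2)·(1+x) + x·(x²-2x-2)·(1+x)^{q-1} ≥ 0. -/
private lemma aux_upper (n : ℕ) (x : ℝ) (hx : 0 ≤ x) :
    (1 + x) ^ (n + 1) * (1 - n * x) ≤ 1 + x := by
  induction n with
  | zero => simp
  | succ n ih =>
    have ht : (0:ℝ) ≤ (1 + x) ^ (n + 1) := by positivity
    have key : (1 + x) * (1 - (↑(n+1):ℝ) * x) ≤ 1 - (n:ℝ) * x := by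
      push_cast
      nlinarith [sq_nonneg x, mul_nonneg (mul_nonneg (Nat.cast_nonneg n) hx) hx]
    calc (1 + x) ^ (n + 1 + 1) * (1 - (↑(n+1):ℝ) * x)
        = (1 + x) ^ (n + 1) * ((1 + x) * (1 - (↑(n+1):ℝ) * x)) := by ring
      _ ≤ (1 + x) ^ (n + 1) * (1 - (n:ℝ) * x) := mul_le_mul_of_nonneg_left key ht
      _ ≤ 1 + x := ih

private lemma cert (x ν T : ℝ) (hx : 0 ≤ x) (hn : 0 ≤ ν)
    (h1 : 0 ≤ T - 1 - (ν + 1) * x) (h2 : 0 ≤ 1 + x - T + ν * x * T)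
    (h3 : 0 ≤ T - 1) :
    0 ≤ (1+x) * x * (x * ((ν+1)*(1+x)^2 + (2*ν+4)*(1+x) + (ν+2)) - 2) * T^2
        + x^2 * (x^2 - 2*x - 2) * T + x * (x + 2) := by
  have hT : (0:ℝ) ≤ T := by linarith
  have hx2 : (0:ℝ) ≤ x^2 := by positivity
  have hx3 : (0:ℝ) ≤ x^3 := by positivity
  have hx4 : (0:ℝ) ≤ x^4 := by positivity
  have hx5 : (0:ℝ) ≤ x^5 := by positivity
  linarith [mul_nonneg (mul_nonneg hx hT) h2, mul_nonneg hx h2,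
    mul_nonneg hx3 hT, mul_nonneg hx2 h1, mul_nonneg (mul_nonneg hn hx2) h1,
    mul_nonneg (mul_nonneg (mul_nonneg hn hx2) hT) h1, mul_nonneg hx4 h3,
    mul_nonneg (mul_nonneg hx2 hT) h1, hx4, mul_nonneg hx3 h1,
    mul_nonneg (mul_nonneg hn hx3) hT, mul_nonneg hx2 h2,
    mul_nonneg (mul_nonneg hn hn) hx3, mul_nonneg (mul_nonneg hn hx2) h2,
    mul_nonneg (mul_nonneg hx3 hT) h1, mul_nonneg (mul_nonneg hx3 hT) h2,
    mul_nonneg hx4 h1, mul_nonneg (mul_nonneg (mul_nonneg hn hx3) hT) h1,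
    mul_nonneg hx3 h2, mul_nonneg hn hx4, mul_nonneg (mul_nonneg hn hx3) h2,
    mul_nonneg (mul_nonneg hx4 h2) h3, mul_nonneg hx5 h3, mul_nonneg hx4 h2,
    mul_nonneg hx5 (mul_nonneg h3 h3), mul_nonneg (mul_nonneg hx4 h1) h3]

private lemma main_ineq (n : ℕ) (x : ℝ) (hx : 0 ≤ x) :
    0 ≤ (n:ℝ) * x * (x + 2) * ((1 + x) ^ (2*n+3) + 1) -
        (2 - 2*x) * (1 + x) ^ (2*n+3) + (4*x + 2) * (1 + x) +
        x * (x^2 - 2*x - 2) * (1 + x) ^ (n+1) := by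
  induction n with
  | zero =>
    have h : (((0:ℕ)):ℝ) * x * (x + 2) * ((1 + x) ^ (2*0+3) + 1) -
        (2 - 2*x) * (1 + x) ^ (2*0+3) + (4*x + 2) * (1 + x) +
        x * (x^2 - 2*x - 2) * (1 + x) ^ (0+1) = 3 * (x^3 * (1+x)) := by
      push_cast; ring
    rw [h]; positivity
  | succ n ih =>
    have hB := one_add_mul_le_pow (by linarith : (-2:ℝ) ≤ x) (n+1)
    push_cast at hB
    have hG1 : 0 ≤ (1+x)^(n+1) - 1 - ((n:ℝ) + 1) * x := by linarith
    have hnx : 0 ≤ ((n:ℝ)+1) * x := by positivity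
    have hG3 : 0 ≤ (1+x)^(n+1) - 1 := by linarith
    have hUp := aux_upper n x hx
    have hG2 : 0 ≤ 1 + x - (1+x)^(n+1) + (n:ℝ) * x * (1+x)^(n+1) := by nlinarith [hUp]
    have hc := cert x (n:ℝ) ((1+x)^(n+1)) hx (Nat.cast_nonneg n) hG1 hG2 hG3
    have p1 : (1 + x) ^ (2*n+3) = ((1+x)^(n+1))^2 * (1+x) := by
      rw [show 2*n+3 = (n+1)*2+1 from by omega, pow_succ, pow_mul]
    have p2 : (1 + x) ^ (2*(n+1)+3) = ((1+x)^(n+1))^2 * (1+x)^3 := by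
      rw [show 2*(n+1)+3 = (n+1)*2+3 from by omega, pow_add, pow_mul]
    have p3 : (1 + x) ^ ((n+1)+1) = (1+x)^(n+1) * (1+x) := pow_succ _ _
    rw [p2, p3]
    rw [p1] at ih
    push_cast
    nlinarith [ih, hc]

/-- **Lemma (the polynomial inequality).** Let `q ≥ 2` be an integer. Then for all
real `x ≥ 0`,
`(q-2)·x·(x+2)·((1+x)^{2q-1} + 1) - (2-2x)·(1+x)^{2q-1} + (4x+2)·(1+x)
  + x·(x²-2x-2)·(1+x)^{q-1} ≥ 0`. -/
theorem polynomial_inequality (q : ℕ) (hq : 2 ≤ q) (x : ℝ) (hx : 0 ≤ x) :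
    ((q : ℝ) - 2) * x * (x + 2) * ((1 + x) ^ (2 * q - 1) + 1) -
        (2 - 2 * x) * (1 + x) ^ (2 * q - 1) + (4 * x + 2) * (1 + x) +
        x * (x ^ 2 - 2 * x - 2) * (1 + x) ^ (q - 1) ≥ 0 := by
  obtain ⟨n, rfl⟩ : ∃ n, q = n + 2 := ⟨q - 2, by omega⟩
  rw [show 2*(n+2)-1 = 2*n+3 from by omega, show (n+2)-1 = n+1 from by omega]
  have h := main_ineq n x hx
  push_cast
  linarith
end

section
/- Let q ≥ 2 be an integer and let k be an integer with 3 ≤ k ≤ 2q+1. Then -2·C(2q-1, k) + (2q-2)·C(2q-1, k-1) + (q-2)·C(2q-1, k-2) - 2·C(q-1, k-1) - 2·C(q-1, k-2) + C(q-1, k-3) ≥ 0, where C(m, j) denotes the binomial coefficient, with the convention C(m, j) = 0 for j > m. -/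
/-- **Lemma (nonnegativity of the coefficients).** Let `q ≥ 2` be an integer and let
`3 ≤ k ≤ 2q+1`. Then
`-2·C(2q-1,k) + (2q-2)·C(2q-1,k-1) + (q-2)·C(2q-1,k-2)
  - 2·C(q-1,k-1) - 2·C(q-1,k-2) + C(q-1,k-3) ≥ 0`,
with the convention `C(m,j) = 0` for `j > m`. -/
theorem coefficient_nonneg (q k : ℕ) (hq : 2 ≤ q) (hk3 : 3 ≤ k) (hk : k ≤ 2 * q + 1) :
    (0 : ℤ) ≤
      -2 * ((2 * q - 1).choose k : ℤ) + (2 * (q : ℤ) - 2) * ((2 * q - 1).choose (k - 1) : ℤ) +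
        ((q : ℤ) - 2) * ((2 * q - 1).choose (k - 2) : ℤ) - 2 * ((q - 1).choose (k - 1) : ℤ) -
        2 * ((q - 1).choose (k - 2) : ℤ) + ((q - 1).choose (k - 3) : ℤ) := by
  obtain ⟨r, rfl⟩ : ∃ r, q = r + 2 := ⟨q - 2, by omega⟩
  obtain ⟨j, rfl⟩ : ∃ j, k = j + 3 := ⟨k - 3, by omega⟩
  have hj : j ≤ 2 * r + 2 := by omega
  simp only [show 2 * (r + 2) - 1 = 2 * r + 3 from by omega,
    show r + 2 - 1 = r + 1 from by omega, show j + 3 - 1 = j + 2 from by omega,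
    show j + 3 - 2 = j + 1 from by omega, show j + 3 - 3 = j from by omega]
  push_cast
  rcases le_or_gt j (2 * r) with hle | hgt
  · rcases Nat.eq_zero_or_pos r with hr | hr
    · subst hr
      interval_cases j
      norm_num [Nat.choose]
    · -- main case: 1 ≤ r, j ≤ 2r
      have h1 : (2 * r + 3).choose (j + 3) * (j + 3)
          = (2 * r + 3).choose (j + 2) * (2 * r + 1 - j) := by
        rw [Nat.choose_succ_right_eq]
        congr 1
        omega
      have h1' : ((2 * r + 3).choose (j + 3) : ℤ) * ((j : ℤ) + 3)
          = ((2 * r + 3).choose (j + 2) : ℤ) * (2 * (r : ℤ) + 1 - (j : ℤ)) := by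
        zify [show j ≤ 2 * r + 1 from by omega] at h1
        linarith [h1]
      have h2 : (r + 2).choose (j + 2) = (r + 1).choose (j + 1) + (r + 1).choose (j + 2) :=
        Nat.choose_succ_succ _ _
      have h2' : ((r + 2).choose (j + 2) : ℤ)
          = ((r + 1).choose (j + 1) : ℤ) + ((r + 1).choose (j + 2) : ℤ) := by
        exact_mod_cast congrArg (Nat.cast : ℕ → ℤ) h2
      have h3' : ((r + 2).choose (j + 2) : ℤ) ≤ ((2 * r + 3).choose (j + 2) : ℤ) := by
        exact_mod_cast Nat.choose_le_choose (j + 2) (show r + 2 ≤ 2 * r + 3 by omega)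
      have hr' : (1 : ℤ) ≤ (r : ℤ) := by exact_mod_cast hr
      have hjnn : (0 : ℤ) ≤ (j : ℤ) := by positivity
      have hCnn : (0 : ℤ) ≤ ((r + 2).choose (j + 2) : ℤ) := by positivity
      have hcoef : (j : ℤ) + 3 ≤ ((r : ℤ) + 2) * ((j : ℤ) + 1) := by
        nlinarith [mul_nonneg (by positivity : (0 : ℤ) ≤ (r : ℤ)) hjnn]
      have step1 := mul_le_mul_of_nonneg_right hcoef hCnn
      have step2 := mul_le_mul_of_nonneg_left h3'
        (by positivity : (0 : ℤ) ≤ 2 * (((r : ℤ) + 2) * ((j : ℤ) + 1)))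
      have step : 2 * ((j : ℤ) + 3) * (((r + 1).choose (j + 1) : ℤ) + ((r + 1).choose (j + 2) : ℤ))
          ≤ 2 * (((r : ℤ) + 2) * ((j : ℤ) + 1)) * ((2 * r + 3).choose (j + 2) : ℤ) := by
        rw [← h2']
        linarith [step1, step2]
      have e : ((j : ℤ) + 3) * ((2 * (r : ℤ) + 2) * ((2 * r + 3).choose (j + 2) : ℤ)
            - 2 * ((2 * r + 3).choose (j + 3) : ℤ) - 2 * ((r + 1).choose (j + 1) : ℤ)
            - 2 * ((r + 1).choose (j + 2) : ℤ))
          = 2 * (((r : ℤ) + 2) * ((j : ℤ) + 1)) * ((2 * r + 3).choose (j + 2) : ℤ)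
            - 2 * ((j : ℤ) + 3) * (((r + 1).choose (j + 1) : ℤ) + ((r + 1).choose (j + 2) : ℤ)) := by
        linear_combination (-2 : ℤ) * h1'
      have key : ((j : ℤ) + 3) * 0 ≤ ((j : ℤ) + 3) * ((2 * (r : ℤ) + 2) * ((2 * r + 3).choose (j + 2) : ℤ)
            - 2 * ((2 * r + 3).choose (j + 3) : ℤ) - 2 * ((r + 1).choose (j + 1) : ℤ)
            - 2 * ((r + 1).choose (j + 2) : ℤ)) := by
        rw [e, mul_zero]
        linarith [step]
      have hj3 : (0 : ℤ) < (j : ℤ) + 3 := by positivity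
      have key2 := le_of_mul_le_mul_left key hj3
      have hA1nn : (0 : ℤ) ≤ (r : ℤ) * ((2 * r + 3).choose (j + 1) : ℤ) := by positivity
      have hB0nn : (0 : ℤ) ≤ ((r + 1).choose j : ℤ) := by positivity
      linarith [key2, hA1nn, hB0nn]
  · -- edge case: j ≥ 2r+1, several binomials vanish
    have e1 : (2 * r + 3).choose (j + 3) = 0 := Nat.choose_eq_zero_of_lt (by omega)
    have e2 : (r + 1).choose (j + 2) = 0 := Nat.choose_eq_zero_of_lt (by omega)
    have e3 : (r + 1).choose (j + 1) = 0 := Nat.choose_eq_zero_of_lt (by omega)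
    rw [e1, e2, e3]
    push_cast
    have hA2nn : (0 : ℤ) ≤ (2 * (r : ℤ) + 2) * ((2 * r + 3).choose (j + 2) : ℤ) := by positivity
    have hA1nn : (0 : ℤ) ≤ (r : ℤ) * ((2 * r + 3).choose (j + 1) : ℤ) := by positivity
    have hB0nn : (0 : ℤ) ≤ ((r + 1).choose j : ℤ) := by positivity
    linarith [hA2nn, hA1nn, hB0nn]
end

section
/- Let C be a linear subspace of F₂ⁿ and for S ⊆ [n] let r_C(S) denote the dimension over F₂ of the image of C under the coordinate projection onto the coordinates in S. Let 0 ≤ p ≤ 1 and set t = log₂(1+p). Then log₂( Σ_{S⊆[n]} p^{|S|}(1-p)^{n-|S|} · 2^{|S| - r_C(S)} ) ≤ Σ_{T⊆[n]} t^{|T|}(1-t)^{n-|T|} · (|T| - r_C(T)). -/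
set_option maxHeartbeats 2000000

noncomputable def rankProj {n : ℕ} (C : Submodule (ZMod 2) (Fin n → ZMod 2))
    (S : Finset (Fin n)) : ℕ :=
  Module.finrank (ZMod 2)
    (C.map (LinearMap.funLeft (ZMod 2) (ZMod 2) (fun i : {x // x ∈ S} => (i : Fin n))))

section aux

lemma MI.scalar_core {p x : ℝ} (hp0 : 0 ≤ p) (hp1 : p ≤ 1) (hx0 : 0 ≤ x) (hx1 : x ≤ 1) :
    1 - p + p * (2 : ℝ) ^ x ≤ (1 + p) ^ x := by
  have hcc := (Real.concaveOn_rpow hx0 hx1).2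
    (Set.mem_Ici.2 (zero_le_one (α := ℝ)))
    (Set.mem_Ici.2 (by norm_num : (0:ℝ) ≤ 2))
    (by linarith : (0:ℝ) ≤ 1 - p) hp0 (by ring : (1 - p) + p = 1)
  simp only [smul_eq_mul, Real.one_rpow, mul_one] at hcc
  have h2 : 1 - p + p * 2 = 1 + p := by ring
  rw [h2] at hcc
  exact hcc

lemma MI.scalar_log {p A B : ℝ} (hp0 : 0 ≤ p) (hp1 : p ≤ 1) (hA : 0 < A)
    (hAB : A ≤ B) (hB2 : B ≤ 2 * A) :
    Real.logb 2 ((1 - p) * A + p * B) ≤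
      (1 - Real.logb 2 (1 + p)) * Real.logb 2 A + Real.logb 2 (1 + p) * Real.logb 2 B := by
  set t := Real.logb 2 (1 + p) with ht
  have hB : 0 < B := lt_of_lt_of_le hA hAB
  set x := Real.logb 2 (B / A) with hxdef
  have hBA : 0 < B / A := div_pos hB hA
  have h2x : (2:ℝ) ^ x = B / A := Real.rpow_logb (by norm_num) (by norm_num) hBA
  have hx0 : 0 ≤ x := Real.logb_nonneg (by norm_num) ((one_le_div hA).2 hAB)
  have hx1 : x ≤ 1 := by
    have : B / A ≤ 2 := (div_le_iff₀ hA).2 (by linarith)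
    calc x ≤ Real.logb 2 2 := Real.logb_le_logb_of_le (by norm_num) hBA this
      _ = 1 := Real.logb_self_eq_one (by norm_num)
  have hcore := MI.scalar_core hp0 hp1 hx0 hx1
  have h1p : (2:ℝ) ^ t = 1 + p := Real.rpow_logb (by norm_num) (by norm_num) (by linarith)
  have key : (1 - p) * A + p * B ≤ A * (2:ℝ) ^ (t * x) := by
    have h1 : (1 + p) ^ x = (2:ℝ) ^ (t * x) := by
      rw [← h1p]
      exact (Real.rpow_mul (by norm_num) t x).symm
    have h2 : (1 - p) * A + p * B = A * (1 - p + p * ((2:ℝ) ^ x)) := by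
      rw [h2x]; field_simp
    rw [h2, ← h1]
    exact mul_le_mul_of_nonneg_left hcore hA.le
  have hLpos : 0 < (1 - p) * A + p * B := by nlinarith
  calc Real.logb 2 ((1 - p) * A + p * B) ≤ Real.logb 2 (A * (2:ℝ) ^ (t * x)) :=
        Real.logb_le_logb_of_le (by norm_num) hLpos key
    _ = Real.logb 2 A + t * x := by
        rw [Real.logb_mul (ne_of_gt hA) (ne_of_gt (Real.rpow_pos_of_pos (by norm_num) _))]
        simp [Real.logb_rpow (b := 2) (by norm_num) (by norm_num)]
    _ = (1 - t) * Real.logb 2 A + t * Real.logb 2 B := by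
        rw [hxdef, Real.logb_div (ne_of_gt hB) (ne_of_gt hA)]; ring

lemma MI.rankProj_mono {n : ℕ} (C : Submodule (ZMod 2) (Fin n → ZMod 2))
    {S T : Finset (Fin n)} (h : S ⊆ T) : rankProj C S ≤ rankProj C T := by
  classical
  set incl : {x // x ∈ S} → {x // x ∈ T} := fun i => ⟨i.1, h i.2⟩ with hincl
  have hcomp : (fun i : {x // x ∈ S} => (i : Fin n)) =
      (fun j : {x // x ∈ T} => (j : Fin n)) ∘ incl := rfl
  unfold rankProj
  rw [hcomp, LinearMap.funLeft_comp, Submodule.map_comp]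
  exact Submodule.finrank_map_le _ _

lemma MI.rankProj_insert_le {n : ℕ} (C : Submodule (ZMod 2) (Fin n → ZMod 2))
    (a : Fin n) (S : Finset (Fin n)) :
    rankProj C (insert a S) ≤ rankProj C S + 1 := by
  classical
  set T := insert a S with hT
  set W := C.map (LinearMap.funLeft (ZMod 2) (ZMod 2)
      (fun i : {x // x ∈ T} => (i : Fin n))) with hW
  set incl : {x // x ∈ S} → {x // x ∈ T} :=
    fun j => ⟨j.1, Finset.mem_insert_of_mem j.2⟩ with hincl
  set f : ({x // x ∈ T} → ZMod 2) →ₗ[ZMod 2] ({x // x ∈ S} → ZMod 2) :=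
    LinearMap.funLeft (ZMod 2) (ZMod 2) incl with hf
  set f' : W →ₗ[ZMod 2] ({x // x ∈ S} → ZMod 2) := f.comp W.subtype with hf'
  have hrank : Module.finrank (ZMod 2) (LinearMap.range f')
      + Module.finrank (ZMod 2) (LinearMap.ker f')
      = Module.finrank (ZMod 2) W := LinearMap.finrank_range_add_finrank_ker f'
  have hrange : LinearMap.range f' = C.map (LinearMap.funLeft (ZMod 2) (ZMod 2)
      (fun i : {x // x ∈ S} => (i : Fin n))) := by
    rw [hf', LinearMap.range_comp, Submodule.range_subtype, hW, ← Submodule.map_comp,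
      ← LinearMap.funLeft_comp]
    rfl
  have hker : Module.finrank (ZMod 2) (LinearMap.ker f') ≤ 1 := by
    set g : (LinearMap.ker f') →ₗ[ZMod 2] ZMod 2 :=
      (LinearMap.proj (⟨a, Finset.mem_insert_self a S⟩ : {x // x ∈ T})).comp
        (W.subtype.comp (LinearMap.ker f').subtype) with hg
    have hinj : Function.Injective g := by
      intro u v huv
      have h0 : g (u - v) = 0 := by rw [map_sub, huv, sub_self]
      have : u - v = 0 := by
        have hmem : ((u - v : LinearMap.ker f') : W) ∈ LinearMap.ker f' := (u - v).2
        have hfz : f' ((u - v : LinearMap.ker f') : W) = 0 := hmem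
        ext x
        rcases Finset.mem_insert.mp x.2 with hxa | hxS
        · have hxeq : x = (⟨a, Finset.mem_insert_self a S⟩ : {x // x ∈ T}) :=
            Subtype.ext hxa
          rw [hxeq]
          exact h0
        · have := congrFun (congrArg (fun h => (h : {x // x ∈ S} → ZMod 2)) hfz)
            ⟨x.1, hxS⟩
          simpa [hf', hf, LinearMap.funLeft, hincl, Subtype.ext_iff] using this
      rwa [sub_eq_zero] at this
    have := LinearMap.finrank_le_finrank_of_injective hinj
    simpa using this
  have : Module.finrank (ZMod 2) W ≤ rankProj C S + 1 := by
    rw [← hrank, hrange]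
    exact add_le_add le_rfl hker
  exact this

variable {n : ℕ} (C : Submodule (ZMod 2) (Fin n → ZMod 2)) (p : ℝ)

noncomputable def MI.Zf (S : Finset (Fin n)) : ℝ := (S.card : ℝ) - (rankProj C S : ℝ)

noncomputable def MI.Ffun (P : Finset (Fin n)) : ℝ :=
  ∑ U ∈ Pᶜ.powerset,
    (Real.logb 2 (1 + p)) ^ U.card * (1 - Real.logb 2 (1 + p)) ^ (Pᶜ.card - U.card) *
      Real.logb 2 (∑ S ∈ P.powerset,
        p ^ S.card * (1 - p) ^ (P.card - S.card) * (2:ℝ) ^ (MI.Zf C (S ∪ U)))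

lemma MI.Zf_bounds {a : Fin n} {X : Finset (Fin n)} (haX : a ∉ X) :
    MI.Zf C X ≤ MI.Zf C (insert a X) ∧ MI.Zf C (insert a X) ≤ MI.Zf C X + 1 := by
  have h1 : rankProj C (insert a X) ≤ rankProj C X + 1 := MI.rankProj_insert_le C a X
  have h2 : rankProj C X ≤ rankProj C (insert a X) :=
    MI.rankProj_mono C (Finset.subset_insert a X)
  have hc : (insert a X).card = X.card + 1 := Finset.card_insert_of_notMem haX
  have h1' : (rankProj C (insert a X) : ℝ) ≤ (rankProj C X : ℝ) + 1 := by exact_mod_cast h1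
  have h2' : (rankProj C X : ℝ) ≤ (rankProj C (insert a X) : ℝ) := by exact_mod_cast h2
  unfold MI.Zf
  rw [hc]
  push_cast
  constructor <;> linarith

lemma MI.step (hp0 : 0 ≤ p) (hp1 : p ≤ 1) (P : Finset (Fin n)) (a : Fin n) (ha : a ∉ P) :
    MI.Ffun C p (insert a P) ≤ MI.Ffun C p P := by
  classical
  set t := Real.logb 2 (1 + p) with htdef
  have ht0 : 0 ≤ t := Real.logb_nonneg (by norm_num) (by linarith)
  have ht1 : t ≤ 1 := by
    have h2 : Real.logb 2 (1 + p) ≤ Real.logb 2 2 :=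
      Real.logb_le_logb_of_le (by norm_num) (by linarith) (by linarith)
    rwa [Real.logb_self_eq_one (by norm_num)] at h2
  set Q := (insert a P)ᶜ with hQ
  have haQ : a ∉ Q := by simp [hQ]
  have hPc : Pᶜ = insert a Q := by
    rw [hQ, Finset.compl_insert, Finset.insert_erase (Finset.mem_compl.mpr ha)]
  set A : Finset (Fin n) → ℝ := fun U => ∑ S ∈ P.powerset,
    p ^ S.card * (1 - p) ^ (P.card - S.card) * (2:ℝ) ^ (MI.Zf C (S ∪ U)) with hA
  set B : Finset (Fin n) → ℝ := fun U => ∑ S ∈ P.powerset,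
    p ^ S.card * (1 - p) ^ (P.card - S.card) * (2:ℝ) ^ (MI.Zf C (insert a (S ∪ U))) with hB
  have hwnn : ∀ S : Finset (Fin n), 0 ≤ p ^ S.card * (1 - p) ^ (P.card - S.card) :=
    fun S => mul_nonneg (pow_nonneg hp0 _) (pow_nonneg (by linarith) _)
  have hApos : ∀ U, 0 < A U := by
    intro U
    apply Finset.sum_pos'
    · intro S _
      exact mul_nonneg (hwnn S) (Real.rpow_pos_of_pos (by norm_num) _).le
    · by_cases hp : p = 1
      · refine ⟨P, Finset.mem_powerset_self P, ?_⟩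
        rw [hp]
        simp only [one_pow, Nat.sub_self, pow_zero, one_mul]
        exact Real.rpow_pos_of_pos (by norm_num) _
      · refine ⟨∅, Finset.empty_mem_powerset P, ?_⟩
        have : p < 1 := lt_of_le_of_ne hp1 hp
        simp only [Finset.card_empty, pow_zero, Nat.sub_zero, one_mul]
        exact mul_pos (pow_pos (by linarith) _) (Real.rpow_pos_of_pos (by norm_num) _)
  have hnotmem : ∀ U ∈ Q.powerset, ∀ S ∈ P.powerset, a ∉ S ∪ U := by
    intro U hU S hS
    have hUQ := Finset.mem_powerset.mp hU
    have hSP := Finset.mem_powerset.mp hS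
    simp only [Finset.mem_union]
    rintro (h | h)
    · exact ha (hSP h)
    · exact haQ (hUQ h)
  have hAB : ∀ U ∈ Q.powerset, A U ≤ B U := by
    intro U hU
    apply Finset.sum_le_sum
    intro S hS
    exact mul_le_mul_of_nonneg_left
      (Real.rpow_le_rpow_of_exponent_le (by norm_num)
        (MI.Zf_bounds C (hnotmem U hU S hS)).1) (hwnn S)
  have hB2 : ∀ U ∈ Q.powerset, B U ≤ 2 * A U := by
    intro U hU
    rw [Finset.mul_sum]
    apply Finset.sum_le_sum
    intro S hS
    have hz := (MI.Zf_bounds C (hnotmem U hU S hS)).2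
    have hrp : (2:ℝ) ^ (MI.Zf C (insert a (S ∪ U))) ≤ 2 * (2:ℝ) ^ (MI.Zf C (S ∪ U)) := by
      calc (2:ℝ) ^ (MI.Zf C (insert a (S ∪ U))) ≤ (2:ℝ) ^ (MI.Zf C (S ∪ U) + 1) :=
            Real.rpow_le_rpow_of_exponent_le (by norm_num) hz
        _ = 2 * (2:ℝ) ^ (MI.Zf C (S ∪ U)) := by
            rw [Real.rpow_add (by norm_num), Real.rpow_one]; ring
    calc p ^ S.card * (1 - p) ^ (P.card - S.card) * (2:ℝ) ^ (MI.Zf C (insert a (S ∪ U)))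
        ≤ p ^ S.card * (1 - p) ^ (P.card - S.card) * (2 * (2:ℝ) ^ (MI.Zf C (S ∪ U))) :=
          mul_le_mul_of_nonneg_left hrp (hwnn S)
      _ = 2 * (p ^ S.card * (1 - p) ^ (P.card - S.card) * (2:ℝ) ^ (MI.Zf C (S ∪ U))) := by
          ring
  have hL : MI.Ffun C p (insert a P) = ∑ U ∈ Q.powerset,
      t ^ U.card * (1 - t) ^ (Q.card - U.card) *
        Real.logb 2 ((1 - p) * A U + p * B U) := by
    unfold MI.Ffun
    rw [← hQ, ← htdef]
    apply Finset.sum_congr rfl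
    intro U hU
    congr 1
    congr 1
    rw [Finset.sum_powerset_insert ha]
    congr 1
    · rw [Finset.mul_sum]
      apply Finset.sum_congr rfl
      intro S hS
      have hc : S.card ≤ P.card := Finset.card_le_card (Finset.mem_powerset.mp hS)
      rw [Finset.card_insert_of_notMem ha, Nat.succ_sub hc, pow_succ]
      ring
    · rw [Finset.mul_sum]
      apply Finset.sum_congr rfl
      intro S hS
      have haS : a ∉ S := fun h => ha (Finset.mem_powerset.mp hS h)
      rw [Finset.card_insert_of_notMem ha, Finset.card_insert_of_notMem haS,
        Nat.succ_sub_succ, pow_succ, Finset.insert_union]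
      ring
  have hR : MI.Ffun C p P = ∑ U ∈ Q.powerset,
      t ^ U.card * (1 - t) ^ (Q.card - U.card) *
        ((1 - t) * Real.logb 2 (A U) + t * Real.logb 2 (B U)) := by
    unfold MI.Ffun
    rw [← htdef, hPc, Finset.sum_powerset_insert haQ, ← Finset.sum_add_distrib]
    apply Finset.sum_congr rfl
    intro U hU
    have hc : U.card ≤ Q.card := Finset.card_le_card (Finset.mem_powerset.mp hU)
    have haU : a ∉ U := fun h => haQ (Finset.mem_powerset.mp hU h)
    have hBU : (∑ S ∈ P.powerset,
        p ^ S.card * (1 - p) ^ (P.card - S.card) * (2:ℝ) ^ (MI.Zf C (S ∪ insert a U)))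
        = B U := by
      apply Finset.sum_congr rfl
      intro S hS
      rw [Finset.union_insert]
    rw [Finset.card_insert_of_notMem haQ, Finset.card_insert_of_notMem haU,
      Nat.succ_sub hc, Nat.succ_sub_succ, pow_succ, pow_succ, hBU]
    have hAU : (∑ S ∈ P.powerset,
        p ^ S.card * (1 - p) ^ (P.card - S.card) * (2:ℝ) ^ (MI.Zf C (S ∪ U))) = A U := rfl
    rw [hAU]
    ring
  rw [hL, hR]
  apply Finset.sum_le_sum
  intro U hU
  have hw : 0 ≤ t ^ U.card * (1 - t) ^ (Q.card - U.card) :=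
    mul_nonneg (pow_nonneg ht0 _) (pow_nonneg (by linarith) _)
  exact mul_le_mul_of_nonneg_left
    (MI.scalar_log hp0 hp1 (hApos U) (hAB U hU) (hB2 U hU)) hw

lemma MI.down (hp0 : 0 ≤ p) (hp1 : p ≤ 1) (P : Finset (Fin n)) :
    MI.Ffun C p P ≤ MI.Ffun C p (∅ : Finset (Fin n)) := by
  classical
  induction P using Finset.induction_on with
  | empty => exact le_rfl
  | @insert a s ha ih => exact le_trans (MI.step C p hp0 hp1 s a ha) ih

end aux

/-- **Proposition (matroid inequality).** Let `C ⊆ F₂ⁿ` be a linear subspace with matroid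
rank function `r_C`, let `0 ≤ p ≤ 1` and `t = log₂(1+p)`. Then
`log₂(E_{S∼p} 2^{|S|-r_C(S)}) ≤ E_{T∼t}(|T| - r_C(T))`. -/
theorem matroid_inequality (n : ℕ) (C : Submodule (ZMod 2) (Fin n → ZMod 2))
    (p : ℝ) (hp0 : 0 ≤ p) (hp1 : p ≤ 1) :
    Real.logb 2
        (∑ S : Finset (Fin n),
          p ^ S.card * (1 - p) ^ (n - S.card) * (2 : ℝ) ^ ((S.card : ℝ) - (rankProj C S : ℝ))) ≤
      ∑ T : Finset (Fin n),
        Real.logb 2 (1 + p) ^ T.card * (1 - Real.logb 2 (1 + p)) ^ (n - T.card) *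
          ((T.card : ℝ) - (rankProj C T : ℝ)) := by
  classical
  have h := MI.down C p hp0 hp1 (Finset.univ : Finset (Fin n))
  have hL : MI.Ffun C p (Finset.univ : Finset (Fin n)) =
      Real.logb 2 (∑ S : Finset (Fin n),
        p ^ S.card * (1 - p) ^ (n - S.card) *
          (2 : ℝ) ^ ((S.card : ℝ) - (rankProj C S : ℝ))) := by
    unfold MI.Ffun
    rw [Finset.compl_univ, Finset.powerset_empty, Finset.sum_singleton]
    simp only [Finset.card_empty, pow_zero, Nat.sub_zero, one_mul, Nat.zero_sub]
    congr 1
    rw [Finset.powerset_univ]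
    apply Finset.sum_congr rfl
    intro S _
    rw [Finset.union_empty, Finset.card_univ, Fintype.card_fin]
    rfl
  have hR : MI.Ffun C p (∅ : Finset (Fin n)) =
      ∑ T : Finset (Fin n),
        Real.logb 2 (1 + p) ^ T.card * (1 - Real.logb 2 (1 + p)) ^ (n - T.card) *
          ((T.card : ℝ) - (rankProj C T : ℝ)) := by
    unfold MI.Ffun
    rw [Finset.compl_empty, Finset.powerset_univ]
    apply Finset.sum_congr rfl
    intro T _
    rw [Finset.card_univ, Fintype.card_fin]
    congr 1
    rw [Finset.powerset_empty, Finset.sum_singleton]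
    simp only [Finset.card_empty, pow_zero, Nat.sub_zero, one_mul, Finset.empty_union]
    rw [Real.logb_rpow (by norm_num) (by norm_num)]
    rfl
  rw [hL, hR] at h
  exact h
end
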